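/- In a finite MDP, the identity Win^bounded_always(T) = Win^positive_always(T) ∩ Win^bounded_strongly(T) holds: d0 admits a strategy with inf_i M^σ_i(T) > 0 if and only if d0 admits a strategy with M^σ_i(T) > 0 for all i and d0 admits a (possibly different) strategy with liminf_{i→∞} M^σ_i(T) > 0. -/
import Mathlib


open scoped BigOperators
open Classical Filter

/-- A finite Markov decision process with real transition probabilities. -/
structure MDP (Q A : Type) [Fintype Q] [Fintype A] where
  δ : Q → A → Q → ℝ
  δ_nonneg : ∀ q a q', 0 ≤ δ q a q'
  δ_sum : ∀ q a, ∑ q', δ q a q' = 1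

namespace MDP

variable {Q A : Type} [Fintype Q] [Fintype A]

/-- `d` is a probability distribution. -/
def IsDist (d : Q → ℝ) : Prop := (∀ q, 0 ≤ d q) ∧ ∑ q, d q = 1

/-- A (randomized, history-dependent) strategy maps a history (list of past
state-action pairs) and the current state to a distribution over actions. -/
def IsStrategy (σ : List (Q × A) → Q → A → ℝ) : Prop :=
  (∀ h q a, 0 ≤ σ h q a) ∧ ∀ h q, ∑ a, σ h q a = 1

/-- The probability of the finite path `qs` (with actions `as`) of length `i`,
under strategy `σ` from initial distribution `d0`. -/
noncomputable def pathProb (M : MDP Q A) (σ : List (Q × A) → Q → A → ℝ)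
    (d0 : Q → ℝ) (i : ℕ) (qs : Fin (i + 1) → Q) (as : Fin i → A) : ℝ :=
  d0 (qs 0) * ∏ j : Fin i,
    (σ (List.ofFn (fun k : Fin j.val =>
          (qs ⟨k.val, by have := k.isLt; have := j.isLt; omega⟩,
           as ⟨k.val, by have := k.isLt; have := j.isLt; omega⟩)))
        (qs j.castSucc) (as j))
      * M.δ (qs j.castSucc) (as j) (qs j.succ)

/-- The distribution over states after `i` steps (`M^σ_i`). -/
noncomputable def stepDist (M : MDP Q A) (σ : List (Q × A) → Q → A → ℝ)
    (d0 : Q → ℝ) (i : ℕ) (q : Q) : ℝ :=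
  ∑ qs : Fin (i + 1) → Q, ∑ as : Fin i → A,
    if qs (Fin.last i) = q then M.pathProb σ d0 i qs as else 0

/-- The probability mass that a (sub)distribution assigns to a set `T`. -/
noncomputable def mass (d : Q → ℝ) (T : Set Q) : ℝ := ∑ q, T.indicator d q

/-- The support of a (sub)distribution. -/
def supp {α : Type} (d : α → ℝ) : Set α := {q | 0 < d q}

/-- One-step sure predecessors of `Y`. -/
def Pre (M : MDP Q A) (Y : Set Q) : Set Q :=
  {q | ∃ a, ∀ q', 0 < M.δ q a q' → q' ∈ Y}

/-- Probability of reaching `T` within `i` steps. -/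
noncomputable def reachProb (M : MDP Q A) (σ : List (Q × A) → Q → A → ℝ)
    (d0 : Q → ℝ) (T : Set Q) (i : ℕ) : ℝ :=
  ∑ qs : Fin (i + 1) → Q, ∑ as : Fin i → A,
    if ∃ j, qs j ∈ T then M.pathProb σ d0 i qs as else 0

/-- `d0` is almost-sure winning for the reachability objective `◇T`:
some strategy reaches `T` with probability one. -/
def ASReach (M : MDP Q A) (d0 : Q → ℝ) (T : Set Q) : Prop :=
  ∃ σ, IsStrategy σ ∧ (⨆ i : ℕ, M.reachProb σ d0 T i) = 1

/-- `d0` is limit-sure eventually synchronizing in `T`. -/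
def LimitSureEventually (M : MDP Q A) (d0 : Q → ℝ) (T : Set Q) : Prop :=
  ∀ ε > (0 : ℝ), ∃ σ, IsStrategy σ ∧ ∃ i, 1 - ε ≤ mass (M.stepDist σ d0 i) T

/-- `d0` is almost-sure weakly synchronizing in `T`. -/
def ASWeakly (M : MDP Q A) (d0 : Q → ℝ) (T : Set Q) : Prop :=
  ∃ σ, IsStrategy σ ∧ ∀ ε > (0 : ℝ), {i : ℕ | 1 - ε ≤ mass (M.stepDist σ d0 i) T}.Infinite

/-- `d0` is almost-sure strongly synchronizing in `T`. -/
def ASStrongly (M : MDP Q A) (d0 : Q → ℝ) (T : Set Q) : Prop :=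
  ∃ σ, IsStrategy σ ∧ ∀ ε > (0 : ℝ), ∃ N, ∀ i ≥ N, 1 - ε ≤ mass (M.stepDist σ d0 i) T

/-- The uniform distribution on a set `S`. -/
noncomputable def uniformOn (S : Set Q) : Q → ℝ :=
  fun q => if q ∈ S then 1 / (S.ncard : ℝ) else 0

/-- The uniform strategy, playing all actions uniformly at random. -/
noncomputable def uniformStrategy (Q A : Type) [Fintype A] :
    List (Q × A) → Q → A → ℝ :=
  fun _ _ _ => 1 / (Fintype.card A : ℝ)

/-- Action `a` is allowed in `q` w.r.t. `S` if all its successors stay in `S`. -/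
def Allowed (M : MDP Q A) (S : Set Q) (q : Q) (a : A) : Prop :=
  ∀ q', 0 < M.δ q a q' → q' ∈ S

/-- Edge relation within `S` given the allowed actions. -/
def ECEdge (M : MDP Q A) (S : Set Q) (q q' : Q) : Prop :=
  q ∈ S ∧ q' ∈ S ∧ ∃ a, M.Allowed S q a ∧ 0 < M.δ q a q'

/-- `S` is an end-component: closed and strongly connected via allowed actions. -/
def IsEC (M : MDP Q A) (S : Set Q) : Prop :=
  (∀ q ∈ S, ∃ a, M.Allowed S q a) ∧
  ∀ q ∈ S, ∀ q' ∈ S, Relation.ReflTransGen (M.ECEdge S) q q'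

/-- The union of all end-components. -/
def ECUnion (M : MDP Q A) : Set Q := ⋃₀ {S | M.IsEC S}

/-- Positive always synchronizing in `T`. -/
def PosAlways (M : MDP Q A) (d0 : Q → ℝ) (T : Set Q) : Prop :=
  ∃ σ, IsStrategy σ ∧ ∀ i, 0 < mass (M.stepDist σ d0 i) T

/-- Positive eventually synchronizing in `T`. -/
def PosEvent (M : MDP Q A) (d0 : Q → ℝ) (T : Set Q) : Prop :=
  ∃ σ, IsStrategy σ ∧ ∃ i, 0 < mass (M.stepDist σ d0 i) T

/-- Positive weakly synchronizing in `T`. -/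
def PosWeakly (M : MDP Q A) (d0 : Q → ℝ) (T : Set Q) : Prop :=
  ∃ σ, IsStrategy σ ∧ ∀ N, ∃ i ≥ N, 0 < mass (M.stepDist σ d0 i) T

/-- Positive strongly synchronizing in `T`. -/
def PosStrongly (M : MDP Q A) (d0 : Q → ℝ) (T : Set Q) : Prop :=
  ∃ σ, IsStrategy σ ∧ ∃ N, ∀ i ≥ N, 0 < mass (M.stepDist σ d0 i) T

/-- Bounded always synchronizing in `T`. -/
def BndAlways (M : MDP Q A) (d0 : Q → ℝ) (T : Set Q) : Prop :=
  ∃ σ, IsStrategy σ ∧ ∃ ε > (0 : ℝ), ∀ i, ε < mass (M.stepDist σ d0 i) T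

/-- Bounded eventually synchronizing in `T`. -/
def BndEvent (M : MDP Q A) (d0 : Q → ℝ) (T : Set Q) : Prop :=
  ∃ σ, IsStrategy σ ∧ ∃ ε > (0 : ℝ), ∃ i, ε < mass (M.stepDist σ d0 i) T

/-- Bounded weakly synchronizing in `T`. -/
def BndWeakly (M : MDP Q A) (d0 : Q → ℝ) (T : Set Q) : Prop :=
  ∃ σ, IsStrategy σ ∧ ∃ ε > (0 : ℝ), ∀ N, ∃ i ≥ N, ε < mass (M.stepDist σ d0 i) T

/-- Bounded strongly synchronizing in `T`. -/
def BndStrongly (M : MDP Q A) (d0 : Q → ℝ) (T : Set Q) : Prop :=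
  ∃ σ, IsStrategy σ ∧ ∃ ε > (0 : ℝ), ∃ N, ∀ i ≥ N, ε < mass (M.stepDist σ d0 i) T

end MDP


namespace MDP

variable {Q A : Type} [Fintype Q] [Fintype A]

set_option linter.unusedSectionVars false

lemma snoc_mk_lt {n : ℕ} {α : Type*} (f : Fin (n+1) → α) (x : α) (m : ℕ) (h : m < n + 1)
    (h2 : m < n + 2) : (Fin.snoc f x : Fin (n+2) → α) ⟨m, h2⟩ = f ⟨m, h⟩ := by
  have : (⟨m, h2⟩ : Fin (n+2)) = Fin.castSucc ⟨m, h⟩ := rfl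
  rw [this, Fin.snoc_castSucc]

lemma snoc_mk_lt' {n : ℕ} {α : Type*} (f : Fin n → α) (x : α) (m : ℕ) (h : m < n)
    (h2 : m < n + 1) : (Fin.snoc f x : Fin (n+1) → α) ⟨m, h2⟩ = f ⟨m, h⟩ := by
  have : (⟨m, h2⟩ : Fin (n+1)) = Fin.castSucc ⟨m, h⟩ := rfl
  rw [this, Fin.snoc_castSucc]

lemma pathProb_snoc (M : MDP Q A) (σ : List (Q × A) → Q → A → ℝ) (d0 : Q → ℝ)
    {i : ℕ} (qs : Fin (i+1) → Q) (as : Fin i → A) (q : Q) (a : A) :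
    M.pathProb σ d0 (i+1) (Fin.snoc qs q) (Fin.snoc as a) =
      M.pathProb σ d0 i qs as *
        (σ (List.ofFn (fun k : Fin i => (qs k.castSucc, as k))) (qs (Fin.last i)) a
          * M.δ (qs (Fin.last i)) a q) := by
  unfold pathProb
  rw [Fin.prod_univ_castSucc]
  have h0 : (Fin.snoc qs q : Fin (i+2) → Q) 0 = qs 0 := by
    have : (0 : Fin (i+2)) = Fin.castSucc 0 := rfl
    rw [this, Fin.snoc_castSucc]
  rw [h0]
  have hmain : ∀ j : Fin i,
      (σ (List.ofFn (fun k : Fin (Fin.castSucc j).val =>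
          ((Fin.snoc qs q : Fin (i+2) → Q) ⟨k.val, by have := k.isLt; have := (Fin.castSucc j).isLt; omega⟩,
           (Fin.snoc as a : Fin (i+1) → A) ⟨k.val, by have := k.isLt; have := (Fin.castSucc j).isLt; omega⟩)))
        ((Fin.snoc qs q : Fin (i+2) → Q) (Fin.castSucc j).castSucc) ((Fin.snoc as a : Fin (i+1) → A) (Fin.castSucc j)))
      * M.δ ((Fin.snoc qs q : Fin (i+2) → Q) (Fin.castSucc j).castSucc) ((Fin.snoc as a : Fin (i+1) → A) (Fin.castSucc j))
          ((Fin.snoc qs q : Fin (i+2) → Q) (Fin.castSucc j).succ)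
      = (σ (List.ofFn (fun k : Fin j.val =>
          (qs ⟨k.val, by have := k.isLt; have := j.isLt; omega⟩,
           as ⟨k.val, by have := k.isLt; have := j.isLt; omega⟩)))
        (qs j.castSucc) (as j)) * M.δ (qs j.castSucc) (as j) (qs j.succ) := by
    intro j
    have e1 : (Fin.snoc qs q : Fin (i+2) → Q) (Fin.castSucc j).castSucc = qs j.castSucc := Fin.snoc_castSucc ..
    have e2 : (Fin.snoc as a : Fin (i+1) → A) (Fin.castSucc j) = as j := Fin.snoc_castSucc ..
    have e3 : (Fin.snoc qs q : Fin (i+2) → Q) (Fin.castSucc j).succ = qs j.succ := by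
      rw [Fin.succ_castSucc, Fin.snoc_castSucc]
    have e4 : (List.ofFn (fun k : Fin (Fin.castSucc j).val =>
          ((Fin.snoc qs q : Fin (i+2) → Q) ⟨k.val, by have := k.isLt; have := (Fin.castSucc j).isLt; omega⟩,
           (Fin.snoc as a : Fin (i+1) → A) ⟨k.val, by have := k.isLt; have := (Fin.castSucc j).isLt; omega⟩)))
        = (List.ofFn (fun k : Fin j.val =>
          (qs ⟨k.val, by have := k.isLt; have := j.isLt; omega⟩,
           as ⟨k.val, by have := k.isLt; have := j.isLt; omega⟩))) := by
      congr 1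
      funext k
      have hk : k.val < i + 1 := by have := k.isLt; have := j.isLt; omega
      have hk' : k.val < i := by have := k.isLt; have := j.isLt; omega
      rw [snoc_mk_lt qs q k.val hk, snoc_mk_lt' as a k.val hk']
    rw [e1, e2, e3, e4]
  rw [Finset.prod_congr rfl (fun j _ => hmain j)]
  -- last term
  have l1 : (Fin.snoc qs q : Fin (i+2) → Q) (Fin.castSucc (Fin.last i)) = qs (Fin.last i) := Fin.snoc_castSucc ..
  have l2 : (Fin.snoc as a : Fin (i+1) → A) (Fin.last i) = a := Fin.snoc_last ..
  have l3 : (Fin.snoc qs q : Fin (i+2) → Q) (Fin.last i).succ = q := by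
    rw [Fin.succ_last, Fin.snoc_last]
  have l4 : (List.ofFn (fun k : Fin (Fin.last i).val =>
          ((Fin.snoc qs q : Fin (i+2) → Q) ⟨k.val, by have := k.isLt; have := (Fin.last i).isLt; omega⟩,
           (Fin.snoc as a : Fin (i+1) → A) ⟨k.val, by have := k.isLt; have := (Fin.last i).isLt; omega⟩)))
      = (List.ofFn (fun k : Fin i => (qs k.castSucc, as k))) := by
    congr 1
    funext k
    have hk : k.val < i + 1 := by have := k.isLt; omega
    have hk' : k.val < i := k.isLt
    rw [snoc_mk_lt qs q k.val hk, snoc_mk_lt' as a k.val hk']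
    rfl
  rw [l1, l2, l3, l4]
  ring

end MDP

namespace MDP
variable {Q A : Type} [Fintype Q] [Fintype A]

lemma pathProb_nonneg (M : MDP Q A) {σ : List (Q × A) → Q → A → ℝ} {d0 : Q → ℝ}
    (hσ : ∀ h q a, 0 ≤ σ h q a) (hd0 : ∀ q, 0 ≤ d0 q) (i : ℕ)
    (qs : Fin (i+1) → Q) (as : Fin i → A) : 0 ≤ M.pathProb σ d0 i qs as := by
  unfold pathProb
  apply mul_nonneg (hd0 _)
  apply Finset.prod_nonneg
  intro j _
  exact mul_nonneg (hσ _ _ _) (M.δ_nonneg _ _ _)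

/-- snoc as an equiv. -/
def snocEquiv (α : Type*) (n : ℕ) : ((Fin n → α) × α) ≃ (Fin (n+1) → α) where
  toFun p := Fin.snoc p.1 p.2
  invFun f := (Fin.init f, f (Fin.last n))
  left_inv p := by simp [Fin.init_snoc]
  right_inv f := by simp [Fin.snoc_init_self]

lemma sum_pathProb (M : MDP Q A) {σ : List (Q × A) → Q → A → ℝ} {d0 : Q → ℝ}
    (hσ : IsStrategy σ) (hd0 : IsDist d0) (i : ℕ) :
    ∑ qs : Fin (i+1) → Q, ∑ as : Fin i → A, M.pathProb σ d0 i qs as = 1 := by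
  induction i with
  | zero =>
    have : ∀ qs : Fin 1 → Q, ∑ as : Fin 0 → A, M.pathProb σ d0 0 qs as = d0 (qs 0) := by
      intro qs
      rw [Finset.sum_eq_single (fun k => k.elim0)]
      · simp [pathProb]
      · intro b _ hb; exact absurd (funext fun k => k.elim0) hb
      · intro h; exact absurd (Finset.mem_univ _) h
    rw [Finset.sum_congr rfl (fun qs _ => this qs)]
    rw [← Fintype.sum_equiv (Equiv.funUnique (Fin 1) Q).symm _ (fun qs => d0 (qs 0)) (fun q => rfl)]
    exact hd0.2
  | succ i IH =>
    rw [← Fintype.sum_equiv (snocEquiv Q (i+1)) _ _ (fun p => rfl)]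
    have inner : ∀ p : (Fin (i+1) → Q) × Q,
        ∑ as : Fin (i+1) → A, M.pathProb σ d0 (i+1) (snocEquiv Q (i+1) p) as
        = ∑ r : (Fin i → A) × A, M.pathProb σ d0 (i+1) (Fin.snoc p.1 p.2) (Fin.snoc r.1 r.2) := by
      intro p
      rw [← Fintype.sum_equiv (snocEquiv A i) _ _ (fun r => rfl)]
      rfl
    rw [Finset.sum_congr rfl (fun p _ => inner p)]
    rw [Fintype.sum_prod_type]
    have step : ∀ qs : Fin (i+1) → Q, ∀ q : Q,
        ∑ r : (Fin i → A) × A, M.pathProb σ d0 (i+1) (Fin.snoc qs q) (Fin.snoc r.1 r.2)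
        = ∑ as : Fin i → A, ∑ a : A, M.pathProb σ d0 i qs as *
            (σ (List.ofFn (fun k : Fin i => (qs k.castSucc, as k))) (qs (Fin.last i)) a
              * M.δ (qs (Fin.last i)) a q) := by
      intro qs q
      rw [Fintype.sum_prod_type]
      exact Finset.sum_congr rfl fun as _ => Finset.sum_congr rfl fun a _ =>
        M.pathProb_snoc σ d0 qs as q a
    calc ∑ qs : Fin (i+1) → Q, ∑ q : Q,
          ∑ r : (Fin i → A) × A, M.pathProb σ d0 (i+1) (Fin.snoc qs q) (Fin.snoc r.1 r.2)
        = ∑ qs : Fin (i+1) → Q, ∑ as : Fin i → A, M.pathProb σ d0 i qs as := by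
          apply Finset.sum_congr rfl; intro qs _
          rw [Finset.sum_congr rfl (fun q _ => step qs q)]
          rw [Finset.sum_comm]
          apply Finset.sum_congr rfl; intro as _
          rw [Finset.sum_comm]
          have : ∀ a : A, ∑ q : Q, M.pathProb σ d0 i qs as *
              (σ (List.ofFn (fun k : Fin i => (qs k.castSucc, as k))) (qs (Fin.last i)) a
                * M.δ (qs (Fin.last i)) a q)
              = M.pathProb σ d0 i qs as *
                σ (List.ofFn (fun k : Fin i => (qs k.castSucc, as k))) (qs (Fin.last i)) a := by
            intro a
            rw [← Finset.mul_sum]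
            have : ∑ q : Q, σ (List.ofFn (fun k : Fin i => (qs k.castSucc, as k))) (qs (Fin.last i)) a
                * M.δ (qs (Fin.last i)) a q
                = σ (List.ofFn (fun k : Fin i => (qs k.castSucc, as k))) (qs (Fin.last i)) a
                  * ∑ q : Q, M.δ (qs (Fin.last i)) a q := by rw [Finset.mul_sum]
            rw [this, M.δ_sum, mul_one]
          rw [Finset.sum_congr rfl (fun a _ => this a), ← Finset.mul_sum, hσ.2, mul_one]
      _ = 1 := IH

end MDP

namespace MDP
variable {Q A : Type} [Fintype Q] [Fintype A]

noncomputable def wgtAux (σ : List (Q × A) → Q → A → ℝ) : List (Q × A) → ℝ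
  | [] => 1
  | (p :: t) => wgtAux σ t * σ t.reverse p.1 p.2

noncomputable def wgt (σ : List (Q × A) → Q → A → ℝ) (h : List (Q × A)) : ℝ :=
  wgtAux σ h.reverse

@[simp] lemma wgt_nil (σ : List (Q × A) → Q → A → ℝ) : wgt σ [] = 1 := rfl

lemma wgt_concat (σ : List (Q × A) → Q → A → ℝ) (h : List (Q × A)) (q : Q) (a : A) :
    wgt σ (h ++ [(q, a)]) = wgt σ h * σ h q a := by
  unfold wgt
  rw [List.reverse_append]
  simp [wgtAux]

lemma wgtAux_nonneg {σ : List (Q × A) → Q → A → ℝ} (hσ : ∀ h q a, 0 ≤ σ h q a)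
    (l : List (Q × A)) : 0 ≤ wgtAux σ l := by
  induction l with
  | nil => norm_num [wgtAux]
  | cons p t IH => exact mul_nonneg IH (hσ _ _ _)

lemma wgt_nonneg {σ : List (Q × A) → Q → A → ℝ} (hσ : ∀ h q a, 0 ≤ σ h q a)
    (h : List (Q × A)) : 0 ≤ wgt σ h := wgtAux_nonneg hσ _

/-- The mixture (posterior-weighted) of two strategies. -/
noncomputable def mix (σ1 σ2 : List (Q × A) → Q → A → ℝ) (h : List (Q × A)) (q : Q) (a : A) : ℝ :=
  if wgt σ1 h + wgt σ2 h = 0 then σ1 h q a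
  else (wgt σ1 h * σ1 h q a + wgt σ2 h * σ2 h q a) / (wgt σ1 h + wgt σ2 h)

lemma isStrategy_mix {σ1 σ2 : List (Q × A) → Q → A → ℝ}
    (h1 : IsStrategy σ1) (h2 : IsStrategy σ2) : IsStrategy (mix σ1 σ2) := by
  constructor
  · intro h q a
    unfold mix
    split_ifs with hc
    · exact h1.1 _ _ _
    · apply div_nonneg
      · exact add_nonneg (mul_nonneg (wgt_nonneg h1.1 _) (h1.1 _ _ _))
          (mul_nonneg (wgt_nonneg h2.1 _) (h2.1 _ _ _))
      · exact add_nonneg (wgt_nonneg h1.1 _) (wgt_nonneg h2.1 _)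
  · intro h q
    unfold mix
    split_ifs with hc
    · exact h1.2 _ _
    · rw [← Finset.sum_div]
      rw [Finset.sum_add_distrib, ← Finset.mul_sum, ← Finset.mul_sum, h1.2, h2.2, mul_one, mul_one]
      exact div_self hc

lemma wgt_mix {σ1 σ2 : List (Q × A) → Q → A → ℝ}
    (h1 : IsStrategy σ1) (h2 : IsStrategy σ2) (h : List (Q × A)) :
    wgt (mix σ1 σ2) h = (wgt σ1 h + wgt σ2 h) / 2 := by
  induction h using List.reverseRecOn with
  | nil => norm_num
  | append_singleton t p IH =>
    obtain ⟨q, a⟩ := p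
    rw [wgt_concat, wgt_concat, wgt_concat, IH]
    unfold mix
    split_ifs with hc
    · have hz1 : wgt σ1 t = 0 := by
        have := wgt_nonneg h1.1 t; have := wgt_nonneg h2.1 t; linarith
      have hz2 : wgt σ2 t = 0 := by
        have := wgt_nonneg h1.1 t; have := wgt_nonneg h2.1 t; linarith
      rw [hz1, hz2]; ring
    · field_simp

end MDP

namespace MDP
variable {Q A : Type} [Fintype Q] [Fintype A]

set_option linter.unusedSectionVars false in
lemma prod_sigma_eq_wgt (σ : List (Q × A) → Q → A → ℝ) :
    ∀ {i : ℕ} (qs : Fin (i+1) → Q) (as : Fin i → A),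
    (∏ j : Fin i, σ (List.ofFn (fun k : Fin j.val =>
          (qs ⟨k.val, by have := k.isLt; have := j.isLt; omega⟩,
           as ⟨k.val, by have := k.isLt; have := j.isLt; omega⟩)))
        (qs j.castSucc) (as j))
      = wgt σ (List.ofFn (fun k : Fin i => (qs k.castSucc, as k))) := by
  intro i
  induction i with
  | zero => intro qs as; simp
  | succ i IH =>
    intro qs as
    set qs' : Fin (i+1) → Q := fun m => qs m.castSucc with hqs'
    set as' : Fin i → A := fun m => as m.castSucc with has'
    rw [Fin.prod_univ_castSucc]
    have hterm : ∀ j : Fin i,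
        σ (List.ofFn (fun k : Fin (Fin.castSucc j).val =>
            (qs ⟨k.val, by have := k.isLt; have := (Fin.castSucc j).isLt; omega⟩,
             as ⟨k.val, by have := k.isLt; have := (Fin.castSucc j).isLt; omega⟩)))
          (qs (Fin.castSucc j).castSucc) (as (Fin.castSucc j))
        = σ (List.ofFn (fun k : Fin j.val =>
            (qs' ⟨k.val, by have := k.isLt; have := j.isLt; omega⟩,
             as' ⟨k.val, by have := k.isLt; have := j.isLt; omega⟩)))
          (qs' j.castSucc) (as' j) := by
      intro j
      congr 1
    rw [Finset.prod_congr rfl (fun j _ => hterm j), IH qs' as']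
    have hofn : (List.ofFn (fun k : Fin (i+1) => (qs k.castSucc, as k)))
        = (List.ofFn (fun k : Fin i => (qs' k.castSucc, as' k)))
          ++ [(qs (Fin.last i).castSucc, as (Fin.last i))] := by
      rw [List.ofFn_succ' (fun k : Fin (i+1) => (qs k.castSucc, as k))]
      rw [List.concat_eq_append]
    rw [hofn, wgt_concat]
    congr 1


set_option linter.unusedSectionVars false in
lemma pathProb_eq (M : MDP Q A) (σ : List (Q × A) → Q → A → ℝ) (d0 : Q → ℝ)
    (i : ℕ) (qs : Fin (i+1) → Q) (as : Fin i → A) :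
    M.pathProb σ d0 i qs as = d0 (qs 0)
      * wgt σ (List.ofFn (fun k : Fin i => (qs k.castSucc, as k)))
      * ∏ j : Fin i, M.δ (qs j.castSucc) (as j) (qs j.succ) := by
  unfold pathProb
  rw [Finset.prod_mul_distrib, prod_sigma_eq_wgt, mul_assoc]

lemma pathProb_mix (M : MDP Q A) {σ1 σ2 : List (Q × A) → Q → A → ℝ}
    (h1 : IsStrategy σ1) (h2 : IsStrategy σ2) (d0 : Q → ℝ)
    (i : ℕ) (qs : Fin (i+1) → Q) (as : Fin i → A) :
    M.pathProb (mix σ1 σ2) d0 i qs as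
      = (M.pathProb σ1 d0 i qs as + M.pathProb σ2 d0 i qs as) / 2 := by
  rw [pathProb_eq, pathProb_eq, pathProb_eq, wgt_mix h1 h2]
  ring

lemma stepDist_mix (M : MDP Q A) {σ1 σ2 : List (Q × A) → Q → A → ℝ}
    (h1 : IsStrategy σ1) (h2 : IsStrategy σ2) (d0 : Q → ℝ) (i : ℕ) (q : Q) :
    M.stepDist (mix σ1 σ2) d0 i q
      = (M.stepDist σ1 d0 i q + M.stepDist σ2 d0 i q) / 2 := by
  unfold stepDist
  rw [← Finset.sum_add_distrib, Finset.sum_div]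
  apply Finset.sum_congr rfl; intro qs _
  rw [← Finset.sum_add_distrib, Finset.sum_div]
  apply Finset.sum_congr rfl; intro as _
  rw [M.pathProb_mix h1 h2]
  split_ifs <;> simp

lemma mass_mix (M : MDP Q A) {σ1 σ2 : List (Q × A) → Q → A → ℝ}
    (h1 : IsStrategy σ1) (h2 : IsStrategy σ2) (d0 : Q → ℝ) (T : Set Q) (i : ℕ) :
    mass (M.stepDist (mix σ1 σ2) d0 i) T
      = (mass (M.stepDist σ1 d0 i) T + mass (M.stepDist σ2 d0 i) T) / 2 := by
  unfold mass
  rw [← Finset.sum_add_distrib, Finset.sum_div]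
  apply Finset.sum_congr rfl; intro q _
  rw [Set.indicator_apply, Set.indicator_apply, Set.indicator_apply, M.stepDist_mix h1 h2]
  split_ifs <;> simp

lemma stepDist_nonneg (M : MDP Q A) {σ : List (Q × A) → Q → A → ℝ} {d0 : Q → ℝ}
    (hσ : IsStrategy σ) (hd0 : IsDist d0) (i : ℕ) (q : Q) :
    0 ≤ M.stepDist σ d0 i q := by
  unfold stepDist
  apply Finset.sum_nonneg; intro qs _
  apply Finset.sum_nonneg; intro as _
  split_ifs
  · exact M.pathProb_nonneg hσ.1 hd0.1 i qs as
  · exact le_refl 0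

lemma mass_stepDist_nonneg (M : MDP Q A) {σ : List (Q × A) → Q → A → ℝ} {d0 : Q → ℝ}
    (hσ : IsStrategy σ) (hd0 : IsDist d0) (T : Set Q) (i : ℕ) :
    0 ≤ mass (M.stepDist σ d0 i) T := by
  apply Finset.sum_nonneg; intro q _
  exact Set.indicator_apply_nonneg (fun _ => M.stepDist_nonneg hσ hd0 i q)

lemma sum_stepDist (M : MDP Q A) {σ : List (Q × A) → Q → A → ℝ} {d0 : Q → ℝ}
    (hσ : IsStrategy σ) (hd0 : IsDist d0) (i : ℕ) :
    ∑ q, M.stepDist σ d0 i q = 1 := by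
  unfold stepDist
  rw [Finset.sum_comm]
  rw [← M.sum_pathProb hσ hd0 i]
  apply Finset.sum_congr rfl; intro qs _
  rw [Finset.sum_comm]
  apply Finset.sum_congr rfl; intro as _
  simp

lemma mass_stepDist_le_one (M : MDP Q A) {σ : List (Q × A) → Q → A → ℝ} {d0 : Q → ℝ}
    (hσ : IsStrategy σ) (hd0 : IsDist d0) (T : Set Q) (i : ℕ) :
    mass (M.stepDist σ d0 i) T ≤ 1 := by
  rw [← M.sum_stepDist hσ hd0 i]
  apply Finset.sum_le_sum; intro q _
  rw [Set.indicator_apply]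
  split_ifs
  · exact le_refl _
  · exact M.stepDist_nonneg hσ hd0 i q

end MDP

open MDP in
/-- `Win^bounded_always(T) = Win^positive_always(T) ∩ Win^bounded_strongly(T)`:
some strategy has `inf_i M^σ_i(T) > 0` iff some strategy has `M^σ_i(T) > 0` for
all `i` and some (possibly different) strategy has `liminf_i M^σ_i(T) > 0`. -/
theorem stmt17 {Q A : Type} [Fintype Q] [Fintype A] (M : MDP Q A)
    (d0 : Q → ℝ) (hd0 : IsDist d0) (T : Set Q) :
    (∃ σ, IsStrategy σ ∧ 0 < ⨅ i : ℕ, mass (M.stepDist σ d0 i) T) ↔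
      ((∃ σ, IsStrategy σ ∧ ∀ i : ℕ, 0 < mass (M.stepDist σ d0 i) T) ∧
        ∃ σ, IsStrategy σ ∧
          0 < Filter.liminf (fun i : ℕ => mass (M.stepDist σ d0 i) T)
                Filter.atTop) := by
  constructor
  · rintro ⟨σ, hσ, hpos⟩
    have hbdd : BddBelow (Set.range fun i : ℕ => mass (M.stepDist σ d0 i) T) := by
      refine ⟨0, ?_⟩
      rintro x ⟨i, rfl⟩
      exact M.mass_stepDist_nonneg hσ hd0 T i
    have hall : ∀ i : ℕ, 0 < mass (M.stepDist σ d0 i) T := fun i =>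
      lt_of_lt_of_le hpos (ciInf_le hbdd i)
    refine ⟨⟨σ, hσ, hall⟩, σ, hσ, ?_⟩
    have hcb : Filter.IsCoboundedUnder (· ≥ ·) Filter.atTop
        (fun i : ℕ => mass (M.stepDist σ d0 i) T) :=
      Filter.isCoboundedUnder_ge_of_le Filter.atTop
        (fun i => M.mass_stepDist_le_one hσ hd0 T i)
    refine lt_of_lt_of_le hpos (Filter.le_liminf_of_le hcb ?_)
    exact Filter.Eventually.of_forall fun i => ciInf_le hbdd i
  · rintro ⟨⟨σ1, hσ1, hpos⟩, σ2, hσ2, hlim⟩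
    set f := fun i : ℕ => mass (M.stepDist σ2 d0 i) T with hf
    have hbd : Filter.IsBoundedUnder (· ≥ ·) Filter.atTop f :=
      Filter.isBoundedUnder_of ⟨0, fun i => M.mass_stepDist_nonneg hσ2 hd0 T i⟩
    set c := Filter.liminf f Filter.atTop with hc
    have hc2 : (0:ℝ) < c / 2 := by positivity
    have hev : ∀ᶠ i in Filter.atTop, c / 2 < f i :=
      Filter.eventually_lt_of_lt_liminf (by linarith) hbd
    obtain ⟨N, hN⟩ := Filter.eventually_atTop.mp hev
    refine ⟨mix σ1 σ2, isStrategy_mix hσ1 hσ2, ?_⟩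
    set g := fun i : ℕ => mass (M.stepDist (mix σ1 σ2) d0 i) T with hg
    have hgeq : ∀ i, g i = (mass (M.stepDist σ1 d0 i) T + f i) / 2 := fun i =>
      M.mass_mix hσ1 hσ2 d0 T i
    have hgpos : ∀ i, 0 < g i := by
      intro i
      rw [hgeq]
      have := M.mass_stepDist_nonneg hσ2 hd0 T i
      have := hpos i
      simp only [hf] at *
      linarith
    set s : Finset ℝ := insert (c / 4) ((Finset.range N).image g) with hs
    have hsne : s.Nonempty := ⟨c / 4, Finset.mem_insert_self _ _⟩
    set ε := s.min' hsne with hε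
    have hεpos : 0 < ε := by
      have := s.min'_mem hsne
      rw [← hε] at this
      rcases Finset.mem_insert.mp this with h | h
      · rw [h]; linarith
      · obtain ⟨i, _, hi⟩ := Finset.mem_image.mp h
        rw [← hi]; exact hgpos i
    have hεle : ∀ i, ε ≤ g i := by
      intro i
      by_cases hi : i < N
      · exact s.min'_le _ (Finset.mem_insert_of_mem
          (Finset.mem_image.mpr ⟨i, Finset.mem_range.mpr hi, rfl⟩))
      · have h1 : ε ≤ c / 4 := s.min'_le _ (Finset.mem_insert_self _ _)
        have h2 : c / 2 < f i := hN i (le_of_not_gt hi)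
        have h3 : 0 ≤ mass (M.stepDist σ1 d0 i) T := M.mass_stepDist_nonneg hσ1 hd0 T i
        rw [hgeq]
        simp only [hf] at *
        linarith
    exact lt_of_lt_of_le hεpos (le_ciInf hεle)
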